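/- Let S be a real n×n diagonal matrix with nonnegative diagonal entries s₁, …, sₙ and let λ > 0. Then over all real n×n matrices Ẑ, the objective (1/2)‖S − SẐ‖_F² + λ‖Ẑ‖_* is minimized by the diagonal matrix Ẑ* with Ẑ*(i,i) = max(1 − λ/sᵢ², 0) (interpreted as 0 when sᵢ = 0); moreover every minimizer is a diagonal matrix. -/

import Mathlib

open Matrix BigOperators Finset

noncomputable def frobNorm {m n : Type*} [Fintype m] [Fintype n] (A : Matrix m n ℝ) : ℝ :=
  Real.sqrt (∑ i, ∑ j, (A i j) ^ 2)

/-- Nuclear norm of a real square matrix: the sum of its singular values,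
i.e. of the square roots of the eigenvalues of `Aᴴ * A`. -/
noncomputable def nuclearNorm {n : Type*} [Fintype n] [DecidableEq n] (Z : Matrix n n ℝ) : ℝ :=
  ∑ i, Real.sqrt ((Matrix.isHermitian_conjTranspose_mul_self Z).eigenvalues i)

/-!
With `S = diagonal s` the objective splits as
`∑ᵢ (½ sᵢ² (1 - Zᵢᵢ)² + λ |Zᵢᵢ|) + ½ ∑_{i ≠ j} sᵢ² Zᵢⱼ² + λ (‖Z‖_* - ∑ᵢ |Zᵢᵢ|)`.
Writing `Z = W Vᵀ` with `V` an orthonormal eigenbasis of `ZᵀZ`, Cauchy–Schwarz column by column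
gives `∑ᵢ |Zᵢᵢ| ≤ ‖Z‖_*`. So the objective is at least the first sum, whose scalar terms are
uniquely minimised by the shrinkage `max (1 - λ / sᵢ²) 0`, and the diagonal shrinkage matrix attains
this bound. At a minimiser all three slacks vanish: `sᵢ Zᵢⱼ = 0` off the diagonal, and
`tr Z = ‖Z‖_*`, which by the equality case of Cauchy–Schwarz makes `Z = V diag(t) Vᵀ` with `t ≥ 0`
positive semidefinite. Hence `Z` is symmetric, and its column through a vanishing diagonal entry
vanishes, which covers `sⱼ = 0`.
-/

noncomputable def klrrShrinkage (s lam : ℝ) : ℝ :=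
  if s = 0 then 0 else max (1 - lam / s ^ 2) 0

noncomputable def klrrScalarObjective (s lam t : ℝ) : ℝ :=
  1 / 2 * s ^ 2 * (1 - t) ^ 2 + lam * |t|

theorem klrrShrinkage_nonneg (s lam : ℝ) : 0 ≤ klrrShrinkage s lam := by
  unfold klrrShrinkage; split_ifs <;> simp

theorem klrrShrinkage_cases (s : ℝ) {lam : ℝ} (hlam : 0 ≤ lam) :
    (klrrShrinkage s lam = 0 ∧ s ^ 2 ≤ lam) ∨
      (s ^ 2 * (1 - klrrShrinkage s lam) = lam ∧ lam < s ^ 2) := by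
  unfold klrrShrinkage
  by_cases hs : s = 0
  · simp [hs, hlam]
  have hs2 : 0 < s ^ 2 := by positivity
  rcases le_or_gt (1 - lam / s ^ 2) 0 with h | h
  · left
    rw [if_neg hs, max_eq_right h]
    exact ⟨rfl, (one_le_div hs2).1 (sub_nonpos.1 h)⟩
  · right
    rw [if_neg hs, max_eq_left h.le]
    refine ⟨by field_simp; ring, ?_⟩
    rwa [sub_pos, div_lt_one hs2] at h

theorem klrrScalarObjective_shrinkage_lt {s lam t : ℝ} (hlam : 0 < lam)
    (ht : t ≠ klrrShrinkage s lam) :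
    klrrScalarObjective s lam (klrrShrinkage s lam) < klrrScalarObjective s lam t := by
  rcases klrrShrinkage_cases s hlam.le with ⟨hd, hs⟩ | ⟨hd, hs⟩
  · rw [hd] at ht ⊢
    have ht0 : 0 < |t| := abs_pos.2 ht
    have hgap : 0 < lam - s ^ 2 + 1 / 2 * s ^ 2 * |t| := by
      rcases (sq_nonneg s).eq_or_lt with h0 | h0
      · rw [← h0]; linarith
      · nlinarith [mul_pos h0 ht0]
    have hdiff : klrrScalarObjective s lam t - klrrScalarObjective s lam 0 =
        |t| * (lam - s ^ 2 + 1 / 2 * s ^ 2 * |t|) + s ^ 2 * (|t| - t) := by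
      simp only [klrrScalarObjective, abs_zero]
      linear_combination (-1 / 2 * s ^ 2) * sq_abs t
    nlinarith [mul_pos ht0 hgap, mul_nonneg (sq_nonneg s) (sub_nonneg.2 (le_abs_self t))]
  · set d := klrrShrinkage s lam
    have hd0 : 0 ≤ d := klrrShrinkage_nonneg s lam
    have hgap : 0 < 1 / 2 * s ^ 2 * (t - d) ^ 2 := by
      have : 0 < s ^ 2 := hlam.trans hs
      have : 0 < (t - d) ^ 2 := by positivity [sub_ne_zero.2 ht]
      positivity
    have hdiff : klrrScalarObjective s lam t - klrrScalarObjective s lam d =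
        1 / 2 * s ^ 2 * (t - d) ^ 2 + lam * (|t| - t) := by
      simp only [klrrScalarObjective, abs_of_nonneg hd0, ← hd]
      ring
    nlinarith [mul_nonneg hlam.le (sub_nonneg.2 (le_abs_self t))]

theorem klrrScalarObjective_shrinkage_le (s : ℝ) {lam : ℝ} (hlam : 0 < lam) (t : ℝ) :
    klrrScalarObjective s lam (klrrShrinkage s lam) ≤ klrrScalarObjective s lam t := by
  rcases eq_or_ne t (klrrShrinkage s lam) with rfl | ht
  · exact le_rfl
  · exact (klrrScalarObjective_shrinkage_lt hlam ht).le

theorem eq_klrrShrinkage_of_sum_le {ι : Type*} [Fintype ι] {lam : ℝ} (hlam : 0 < lam)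
    {s t : ι → ℝ}
    (h : ∑ i, klrrScalarObjective (s i) lam (t i) ≤
      ∑ i, klrrScalarObjective (s i) lam (klrrShrinkage (s i) lam)) (i : ι) :
    t i = klrrShrinkage (s i) lam := by
  by_contra hi
  exact h.not_gt <| sum_lt_sum (fun j _ => klrrScalarObjective_shrinkage_le (s j) hlam (t j))
    ⟨i, mem_univ i, klrrScalarObjective_shrinkage_lt hlam hi⟩

theorem eq_sqrt_smul_of_sum_mul_eq_sqrt {ι : Type*} [Fintype ι] {a b : ι → ℝ}
    (hb : ∑ i, b i ^ 2 = 1) (hab : ∑ i, a i * b i = √(∑ i, a i ^ 2)) :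
    a = √(∑ i, a i ^ 2) • b := by
  have hnorm : ∀ v : ι → ℝ, ‖WithLp.toLp 2 v‖ = √(∑ i, v i ^ 2) := fun v => by
    simp [EuclideanSpace.norm_eq]
  have key := inner_eq_norm_mul_iff_real (x := WithLp.toLp 2 a) (y := WithLp.toLp 2 b)
  rw [hnorm, hnorm, hb, Real.sqrt_one, one_smul, mul_one] at key
  have := key.1 (by simpa [PiLp.inner_apply, mul_comm] using hab)
  simpa using congrArg WithLp.ofLp this

theorem frobNorm_sq {m n : Type*} [Fintype m] [Fintype n] (A : Matrix m n ℝ) :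
    frobNorm A ^ 2 = ∑ i, ∑ j, A i j ^ 2 :=
  Real.sq_sqrt (by positivity)

section

variable {n : Type*} [Fintype n] [DecidableEq n]

open scoped ComplexOrder in
theorem Matrix.PosSemidef.apply_eq_zero_of_diag_eq_zero {𝕜 : Type*} [RCLike 𝕜]
    {A : Matrix n n 𝕜} (hA : A.PosSemidef) {j : n} (hj : A j j = 0) (i : n) : A i j = 0 := by
  have hcol : A *ᵥ Pi.single j 1 = 0 :=
    (hA.dotProduct_mulVec_zero_iff _).1 (by simp [hj])
  simpa [mulVec_single_one] using congrFun hcol i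

theorem nuclearNorm_diagonal (d : n → ℝ) : nuclearNorm (diagonal d) = ∑ i, |d i| := by
  have hA := isHermitian_conjTranspose_mul_self (diagonal d)
  have hroots : univ.val.map hA.eigenvalues = univ.val.map (fun i => d i ^ 2) := by
    have hG : (diagonal d)ᴴ * diagonal d = diagonal (fun i => d i ^ 2) := by
      simp [diagonal_mul_diagonal, sq]
    have := hA.roots_charpoly_eq_eigenvalues.symm.trans (congrArg (·.charpoly.roots) hG)
    rw [charpoly_diagonal, Polynomial.roots_prod _ _ (prod_ne_zero_iff.2
      fun i _ => Polynomial.X_sub_C_ne_zero _)] at this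
    simpa only [Polynomial.roots_X_sub_C, Multiset.bind_singleton, RCLike.ofReal_real_eq_id,
      Function.id_comp] using this
  calc nuclearNorm (diagonal d) = ((univ.val.map hA.eigenvalues).map Real.sqrt).sum := by
        rw [Multiset.map_map]; rfl
    _ = ∑ i, |d i| := by
        rw [hroots, Multiset.map_map]
        exact sum_congr rfl fun i _ => Real.sqrt_sq_eq_abs (d i)

theorem exists_nuclearNorm_eq_sum_sqrt (Z : Matrix n n ℝ) :
    ∃ V W : Matrix n n ℝ, (∀ k, ∑ i, V i k ^ 2 = 1) ∧ Z = W * Vᵀ ∧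
      nuclearNorm Z = ∑ k, √(∑ i, W i k ^ 2) := by
  have hA := isHermitian_conjTranspose_mul_self Z
  set V : Matrix n n ℝ := (hA.eigenvectorUnitary : Matrix n n ℝ)
  have hVtV : Vᵀ * V = 1 := Unitary.coe_star_mul_self hA.eigenvectorUnitary
  have hVVt : V * Vᵀ = 1 := Unitary.coe_mul_star_self hA.eigenvectorUnitary
  refine ⟨V, Z * V, fun k => ?_, by rw [Matrix.mul_assoc, hVVt, Matrix.mul_one], ?_⟩
  · simpa [Matrix.mul_apply, one_apply, sq] using congrFun (congrFun hVtV k) k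
  · refine sum_congr rfl fun k _ => congrArg Real.sqrt ?_
    rw [hA.eigenvalues_eq k, ← mulVec_mulVec, dotProduct_mulVec]
    simp [Matrix.mul_apply, dotProduct, vecMul, mulVec, sq, V, mul_comm]

theorem sum_abs_diag_le_nuclearNorm (Z : Matrix n n ℝ) : ∑ i, |Z i i| ≤ nuclearNorm Z := by
  obtain ⟨V, W, hV, rfl, hnuc⟩ := exists_nuclearNorm_eq_sum_sqrt Z
  rw [hnuc]
  calc ∑ i, |(W * Vᵀ) i i| ≤ ∑ i, ∑ k, |W i k| * |V i k| :=
        sum_le_sum fun i _ => (abs_sum_le_sum_abs _ _).trans_eq <| by simp [abs_mul]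
    _ = ∑ k, ∑ i, |W i k| * |V i k| := sum_comm
    _ ≤ ∑ k, √(∑ i, W i k ^ 2) := sum_le_sum fun k _ => by
        simpa [hV k] using Real.sum_mul_le_sqrt_mul_sqrt univ (|W · k|) (|V · k|)

theorem posSemidef_of_trace_eq_nuclearNorm {Z : Matrix n n ℝ} (h : Z.trace = nuclearNorm Z) :
    Z.PosSemidef := by
  obtain ⟨V, W, hV, rfl, hnuc⟩ := exists_nuclearNorm_eq_sum_sqrt Z
  set r : n → ℝ := fun k => √(∑ i, W i k ^ 2)
  have hcs : ∀ k ∈ univ, ∑ i, W i k * V i k ≤ r k := fun k _ => by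
    simpa [hV k] using Real.sum_mul_le_sqrt_mul_sqrt univ (W · k) (V · k)
  have hsum : ∑ k, ∑ i, W i k * V i k = ∑ k, r k := by
    rw [← hnuc, ← h, sum_comm]
    simp [trace, Matrix.mul_apply]
  have hW : W = V * diagonal r := by
    ext i k
    have := eq_sqrt_smul_of_sum_mul_eq_sqrt (hV k)
      ((sum_eq_sum_iff_of_le hcs).1 hsum k (mem_univ k))
    simpa [mul_comm] using congrFun this i
  rw [hW, ← conjTranspose_eq_transpose_of_trivial]
  exact (PosSemidef.diagonal fun k => Real.sqrt_nonneg _).mul_mul_conjTranspose_same V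

theorem frobNorm_diagonal_sub_diagonal_mul_sq (s : n → ℝ) (Z : Matrix n n ℝ) :
    frobNorm (diagonal s - diagonal s * Z) ^ 2 =
      ∑ i, s i ^ 2 * (1 - Z i i) ^ 2 + ∑ i, ∑ j ∈ univ.erase i, s i ^ 2 * Z i j ^ 2 := by
  rw [frobNorm_sq, ← sum_add_distrib]
  refine sum_congr rfl fun i _ => ?_
  rw [← add_sum_erase _ _ (mem_univ i)]
  congr 1
  · simp only [Matrix.sub_apply, diagonal_apply_eq, diagonal_mul]
    ring
  · refine sum_congr rfl fun j hj => ?_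
    simp only [Matrix.sub_apply, diagonal_apply_ne _ (ne_of_mem_erase hj).symm, diagonal_mul]
    ring

noncomputable def klrrObjective (S : Matrix n n ℝ) (lam : ℝ) (Z : Matrix n n ℝ) : ℝ :=
  (1 / 2) * (frobNorm (S - S * Z)) ^ 2 + lam * nuclearNorm Z

theorem klrrObjective_diagonal (s : n → ℝ) (lam : ℝ) (Z : Matrix n n ℝ) :
    klrrObjective (diagonal s) lam Z =
      ∑ i, klrrScalarObjective (s i) lam (Z i i) +
        1 / 2 * ∑ i, ∑ j ∈ univ.erase i, s i ^ 2 * Z i j ^ 2 +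
        lam * (nuclearNorm Z - ∑ i, |Z i i|) := by
  simp only [klrrObjective, klrrScalarObjective, frobNorm_diagonal_sub_diagonal_mul_sq,
    sum_add_distrib, mul_add, mul_sub, mul_sum, mul_assoc]
  ring

theorem klrrObjective_diagonal_diagonal (s : n → ℝ) (lam : ℝ) (d : n → ℝ) :
    klrrObjective (diagonal s) lam (diagonal d) = ∑ i, klrrScalarObjective (s i) lam (d i) := by
  have hoff : ∑ i, ∑ j ∈ univ.erase i, s i ^ 2 * diagonal d i j ^ 2 = 0 :=
    sum_eq_zero fun i _ => sum_eq_zero fun j hj => by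
      simp [diagonal_apply_ne _ (ne_of_mem_erase hj).symm]
  rw [klrrObjective_diagonal, hoff, nuclearNorm_diagonal]
  simp only [diagonal_apply_eq, mul_zero, sub_self, add_zero]

theorem sum_klrrScalarObjective_le_klrrObjective (s : n → ℝ) {lam : ℝ} (hlam : 0 ≤ lam)
    (Z : Matrix n n ℝ) :
    ∑ i, klrrScalarObjective (s i) lam (Z i i) ≤ klrrObjective (diagonal s) lam Z := by
  have hoff : 0 ≤ ∑ i, ∑ j ∈ univ.erase i, s i ^ 2 * Z i j ^ 2 := by positivity
  have hnuc := mul_nonneg hlam (sub_nonneg.2 (sum_abs_diag_le_nuclearNorm Z))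
  rw [klrrObjective_diagonal]
  linarith

theorem klrrObjective_shrinkage_le (s : n → ℝ) {lam : ℝ} (hlam : 0 < lam) (Z : Matrix n n ℝ) :
    klrrObjective (diagonal s) lam (diagonal fun i => klrrShrinkage (s i) lam) ≤
      klrrObjective (diagonal s) lam Z := by
  rw [klrrObjective_diagonal_diagonal]
  exact (sum_le_sum fun i _ => klrrScalarObjective_shrinkage_le (s i) hlam (Z i i)).trans
    (sum_klrrScalarObjective_le_klrrObjective s hlam.le Z)

theorem klrr_optimality_conditions {s : n → ℝ} {lam : ℝ} (hlam : 0 < lam) {Z : Matrix n n ℝ}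
    (h : klrrObjective (diagonal s) lam Z ≤
      klrrObjective (diagonal s) lam (diagonal fun i => klrrShrinkage (s i) lam)) :
    (∀ i, Z i i = klrrShrinkage (s i) lam) ∧ (∀ i j, i ≠ j → s i * Z i j = 0) ∧
      Z.trace = nuclearNorm Z := by
  rw [klrrObjective_diagonal, klrrObjective_diagonal_diagonal] at h
  have hscalar := sum_le_sum fun i (_ : i ∈ univ) =>
    klrrScalarObjective_shrinkage_le (s i) hlam (Z i i)
  have hoff : 0 ≤ ∑ i, ∑ j ∈ univ.erase i, s i ^ 2 * Z i j ^ 2 := by positivity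
  have hnuc := mul_nonneg hlam.le (sub_nonneg.2 (sum_abs_diag_le_nuclearNorm Z))
  have hdiag := eq_klrrShrinkage_of_sum_le hlam (s := s) (t := fun i => Z i i) (by linarith)
  refine ⟨hdiag, fun i j hij => ?_, ?_⟩
  · have hoff0 : ∑ i, ∑ j ∈ univ.erase i, s i ^ 2 * Z i j ^ 2 = 0 := by linarith
    rw [sum_eq_zero_iff_of_nonneg fun i _ => by positivity] at hoff0
    have := (sum_eq_zero_iff_of_nonneg fun j _ => by positivity).1 (hoff0 i (mem_univ i)) j
      (mem_erase.2 ⟨hij.symm, mem_univ j⟩)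
    exact pow_eq_zero_iff two_ne_zero |>.1 ((mul_pow _ _ 2).trans this)
  · have hslack : lam * (nuclearNorm Z - ∑ i, |Z i i|) = 0 := by linarith
    rw [sub_eq_zero.1 ((mul_eq_zero.1 hslack).resolve_left hlam.ne'), trace]
    exact sum_congr rfl fun i _ => by simp [hdiag i, abs_of_nonneg (klrrShrinkage_nonneg _ _)]

end

theorem diagonal_klrr_solution_general {n : ℕ} (s : Fin n → ℝ)
    (lam : ℝ) (hlam : 0 < lam)
    (S : Matrix (Fin n) (Fin n) ℝ) (hS : S = Matrix.diagonal s)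
    (Zstar : Matrix (Fin n) (Fin n) ℝ)
    (hZstar : Zstar =
      Matrix.diagonal (fun i => if s i = 0 then 0 else max (1 - lam / (s i) ^ 2) 0)) :
    (∀ Z : Matrix (Fin n) (Fin n) ℝ,
      (1 / 2) * (frobNorm (S - S * Zstar)) ^ 2 + lam * nuclearNorm Zstar
        ≤ (1 / 2) * (frobNorm (S - S * Z)) ^ 2 + lam * nuclearNorm Z) ∧
    (∀ Z : Matrix (Fin n) (Fin n) ℝ,
      (∀ W : Matrix (Fin n) (Fin n) ℝ,
        (1 / 2) * (frobNorm (S - S * Z)) ^ 2 + lam * nuclearNorm Z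
          ≤ (1 / 2) * (frobNorm (S - S * W)) ^ 2 + lam * nuclearNorm W) →
      ∀ i j, i ≠ j → Z i j = 0) := by
  subst hS hZstar
  refine ⟨klrrObjective_shrinkage_le s hlam, fun Z hZ i j hij => ?_⟩
  obtain ⟨hdiag, hoff, htr⟩ := klrr_optimality_conditions hlam (hZ _)
  have hpsd := posSemidef_of_trace_eq_nuclearNorm htr
  by_cases hsj : s j = 0
  · exact hpsd.apply_eq_zero_of_diag_eq_zero (by simp [hdiag, hsj, klrrShrinkage]) i
  · rw [← hpsd.isHermitian.apply]
    simpa [hsj] using hoff j i hij.symm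

/-- For a diagonal `S` with nonnegative diagonal entries and `λ > 0`, the
objective `(1/2)‖S − SẐ‖_F² + λ‖Ẑ‖_*` is minimized by the diagonal matrix with entries
`max (1 − λ/sᵢ²) 0` (interpreted as `0` when `sᵢ = 0`), and every minimizer is diagonal. -/
theorem diagonal_klrr_solution {n : ℕ} (s : Fin n → ℝ) (hs : ∀ i, 0 ≤ s i)
    (lam : ℝ) (hlam : 0 < lam)
    (S : Matrix (Fin n) (Fin n) ℝ) (hS : S = Matrix.diagonal s)
    (Zstar : Matrix (Fin n) (Fin n) ℝ)
    (hZstar : Zstar =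
      Matrix.diagonal (fun i => if s i = 0 then 0 else max (1 - lam / (s i) ^ 2) 0)) :
    (∀ Z : Matrix (Fin n) (Fin n) ℝ,
      (1 / 2) * (frobNorm (S - S * Zstar)) ^ 2 + lam * nuclearNorm Zstar
        ≤ (1 / 2) * (frobNorm (S - S * Z)) ^ 2 + lam * nuclearNorm Z) ∧
    (∀ Z : Matrix (Fin n) (Fin n) ℝ,
      (∀ W : Matrix (Fin n) (Fin n) ℝ,
        (1 / 2) * (frobNorm (S - S * Z)) ^ 2 + lam * nuclearNorm Z
          ≤ (1 / 2) * (frobNorm (S - S * W)) ^ 2 + lam * nuclearNorm W) →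
      ∀ i j, i ≠ j → Z i j = 0) :=
  diagonal_klrr_solution_general s lam hlam S hS Zstar hZstar
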